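/- Let H_A and H_B be finite-dimensional complex Hilbert spaces and let ρ_AB be a positive semidefinite operator on H_A ⊗ H_B. Then the minimum of tr(σ_B) over positive semidefinite σ_B on H_B with id_A ⊗ σ_B ≥ ρ_AB equals the maximum of tr(ρ_AB · E_AB) over all positive semidefinite operators E_AB on H_A ⊗ H_B with tr_A(E_AB) ≤ id_B (i.e., relaxing the equality constraint tr_A(E_AB) = id_B to an operator inequality does not change the optimal value). -/

import Mathlib

open Matrix
open scoped Kronecker ComplexConjugate ComplexOrder

noncomputable section

/-- Partial trace over the first (A) subsystem. -/
def ptraceA {A B : Type*} [Fintype A] (M : Matrix (A × B) (A × B) ℂ) :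
    Matrix B B ℂ :=
  Matrix.of fun i j => ∑ a : A, M (a, i) (a, j)

/-- Partial trace over the second (B) subsystem. -/
def ptraceB {A B : Type*} [Fintype B] (M : Matrix (A × B) (A × B) ℂ) :
    Matrix A A ℂ :=
  Matrix.of fun i j => ∑ b : B, M (i, b) (j, b)

/-- A density operator: positive semidefinite with unit trace. -/
def IsDensity {n : Type*} [Fintype n] (ρ : Matrix n n ℂ) : Prop :=
  ρ.PosSemidef ∧ ρ.trace = 1

/-- Conditional min-entropy `H_min(A|B)_ρ = - inf_σ D_∞(ρ ‖ id_A ⊗ σ)`, where the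
infimum ranges over density operators `σ` on `B` and
`D_∞(τ‖τ') = inf {λ | τ ≤ 2^λ τ'}`. -/
def Hmin {A B : Type*} [Fintype A] [Fintype B] [DecidableEq A] [DecidableEq B]
    (ρ : Matrix (A × B) (A × B) ℂ) : ℝ :=
  - sInf {l : ℝ | ∃ σ : Matrix B B ℂ, IsDensity σ ∧
      (((2 : ℝ) ^ l : ℝ) • ((1 : Matrix A A ℂ) ⊗ₖ σ) - ρ).PosSemidef}

/-- The square root of a positive semidefinite matrix, as `Matrix.PosSemidef.sqrt` was defined
in the older Mathlib (removed since). -/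
def Matrix.PosSemidef.sqrt {n : Type*} [Fintype n] [DecidableEq n] {M : Matrix n n ℂ}
    (hA : M.PosSemidef) : Matrix n n ℂ :=
  hA.1.eigenvectorUnitary.1 * diagonal ((↑) ∘ (√·) ∘ hA.1.eigenvalues) *
    (star hA.1.eigenvectorUnitary : Matrix n n ℂ)

open scoped Classical in
/-- Positive semidefinite square root (junk value `0` off the PSD cone). -/
def psqrt {n : Type*} [Fintype n] [DecidableEq n] (M : Matrix n n ℂ) : Matrix n n ℂ :=
  if h : M.PosSemidef then h.sqrt else 0

/-- Trace norm `‖M‖₁ = tr √(Mᴴ M)`. -/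
def traceNorm {n : Type*} [Fintype n] [DecidableEq n] (M : Matrix n n ℂ) : ℝ :=
  (psqrt (Mᴴ * M)).trace.re

/-- Fidelity `F(ρ,σ) = ‖√ρ √σ‖₁`. -/
def fidelity {n : Type*} [Fintype n] [DecidableEq n] (ρ σ : Matrix n n ℂ) : ℝ :=
  traceNorm (psqrt ρ * psqrt σ)

/-- Choi matrix of a linear map on matrices. -/
def choi {B A' : Type*} [Fintype B] [DecidableEq B] [Fintype A']
    (F : Matrix B B ℂ →ₗ[ℂ] Matrix A' A' ℂ) : Matrix (B × A') (B × A') ℂ :=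
  Matrix.of fun p q => (F (Matrix.single p.1 q.1 1)) p.2 q.2

/-- A quantum operation (CPTP map): completely positive (PSD Choi matrix, by Choi's
theorem) and trace-preserving. -/
def IsCPTP {B A' : Type*} [Fintype B] [DecidableEq B] [Fintype A']
    (F : Matrix B B ℂ →ₗ[ℂ] Matrix A' A' ℂ) : Prop :=
  (choi F).PosSemidef ∧ ∀ M : Matrix B B ℂ, (F M).trace = M.trace

/-- The map `id_A ⊗ F` applied to a bipartite operator. -/
def idTensor {A B A' : Type*} [Fintype B]
    (F : Matrix B B ℂ →ₗ[ℂ] Matrix A' A' ℂ) (ρ : Matrix (A × B) (A × B) ℂ) :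
    Matrix (A × A') (A × A') ℂ :=
  Matrix.of fun p q => (F (Matrix.of fun b b' => ρ (p.1, b) (q.1, b'))) p.2 q.2

/-- The quadratic form `⟨ψ|M|ψ⟩` (real part). -/
def pureOverlap {n : Type*} [Fintype n] (ψ : n → ℂ) (M : Matrix n n ℂ) : ℝ :=
  (∑ p, ∑ q, conj (ψ p) * M p q * ψ q).re

/-- The maximally entangled state `|Φ⟩ = d^{-1/2} ∑ₓ |x⟩|x⟩`. -/
def maxEnt (A : Type*) [Fintype A] [DecidableEq A] : A × A → ℂ :=
  fun p => if p.1 = p.2 then ((Real.sqrt (Fintype.card A))⁻¹ : ℝ) else 0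

/-- `q_corr(A|B)_ρ`: `d_A` times the maximal squared fidelity with the maximally
entangled state achievable by quantum operations on `B`. -/
def qcorr {A B : Type*} [Fintype A] [Fintype B] [DecidableEq A] [DecidableEq B]
    (ρ : Matrix (A × B) (A × B) ℂ) : ℝ :=
  (Fintype.card A : ℝ) *
    sSup {x : ℝ | ∃ F : Matrix B B ℂ →ₗ[ℂ] Matrix A A ℂ, IsCPTP F ∧
      x = pureOverlap (maxEnt A) (idTensor F ρ)}

/-- The completely mixed state. -/
def mixed (A : Type*) [Fintype A] [DecidableEq A] : Matrix A A ℂ :=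
  ((Fintype.card A : ℂ)⁻¹) • (1 : Matrix A A ℂ)

/-- `q_decpl(A|B)_ρ`: `d_A` times the maximal squared fidelity with `τ_A ⊗ σ_B`. -/
def qdecpl {A B : Type*} [Fintype A] [Fintype B] [DecidableEq A] [DecidableEq B]
    (ρ : Matrix (A × B) (A × B) ℂ) : ℝ :=
  (Fintype.card A : ℝ) *
    sSup {x : ℝ | ∃ σ : Matrix B B ℂ, IsDensity σ ∧
      x = (fidelity ρ ((mixed A) ⊗ₖ σ)) ^ 2}

/-- Reduced state `tr_C |ψ⟩⟨ψ|` of a pure state `ψ` on `(A ⊗ B) ⊗ C`. -/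
def redL {S C : Type*} [Fintype C] (ψ : S × C → ℂ) : Matrix S S ℂ :=
  Matrix.of fun s s' => ∑ c, ψ (s, c) * conj (ψ (s', c))

/-- Reduced state `tr_B |ψ⟩⟨ψ|` on `A ⊗ C` of a pure state `ψ` on `(A ⊗ B) ⊗ C`. -/
def redAC {A B C : Type*} [Fintype B] (ψ : (A × B) × C → ℂ) :
    Matrix (A × C) (A × C) ℂ :=
  Matrix.of fun p q => ∑ b, ψ ((p.1, b), p.2) * conj (ψ ((q.1, b), q.2))

/-!
The value `v` of the primal program is attained: feasible points of bounded trace form a compact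
set, because the entries of a positive semidefinite matrix are bounded by its trace.
The point `(0, v)` lies on the boundary of the convex set of pairs `(Y, t)` such that the primal
program with `ρ` perturbed by `Y` has a feasible point of value at most `t`. The Slater point
`c • 1` puts `(0, t)` in the interior for large `t`, so a supporting hyperplane at `(0, v)` is not
vertical, and it yields a linear functional `φ`, nonnegative on positive semidefinite matrices,
with `φ (1 ⊗ τ) ≤ tr τ` and `v ≤ φ ρ`. Writing `φ` as `Y ↦ re tr (E Y)` with `E` Hermitian gives a
dual feasible `E` of value at least `v`; weak duality gives the reverse inequality.
-/

open scoped MatrixOrder ComplexStarModule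

namespace Matrix

variable {n : Type*} [Fintype n]

lemma IsHermitian.posSemidef_of_re_trace_mul_nonneg {M : Matrix n n ℂ} (hM : M.IsHermitian)
    (h : ∀ P : Matrix n n ℂ, P.PosSemidef → 0 ≤ (M * P).trace.re) : M.PosSemidef := by
  refine PosSemidef.of_dotProduct_mulVec_nonneg hM fun x => Complex.nonneg_iff.mpr ⟨?_, ?_⟩
  · simpa [mul_vecMulVec, trace_vecMulVec, dotProduct_comm] using
      h _ (posSemidef_vecMulVec_self_star x)
  · exact (hM.im_star_dotProduct_mulVec_self x).symm

lemma re_trace_realPart_mul (Z : Matrix n n ℂ) {M : Matrix n n ℂ} (hM : M.IsHermitian) :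
    ((ℜ Z : Matrix n n ℂ) * M).trace.re = (Z * M).trace.re := by
  have : (Zᴴ * M).trace = star (Z * M).trace := by
    rw [← hM.eq, ← conjTranspose_mul, trace_conjTranspose, hM.eq, trace_mul_comm]
  rw [realPart_apply_coe, Matrix.smul_mul, Matrix.add_mul, trace_smul, trace_add,
    star_eq_conjTranspose, this, Complex.star_def, Complex.add_conj]
  simp

lemma PosSemidef.norm_apply_le_re_trace {M : Matrix n n ℂ} (hM : M.PosSemidef) (i j : n) :
    ‖M i j‖ ≤ M.trace.re := by
  have hdiag k : 0 ≤ (M k k).re ∧ (M k k).im = 0 := by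
    simpa [eq_comm] using Complex.nonneg_iff.mp hM.diag_nonneg
  have hle k : (M k k).re ≤ M.trace.re := by
    simpa [trace] using Finset.single_le_sum (fun k _ => (hdiag k).1) (Finset.mem_univ k)
  have hdet : M i j * M j i ≤ M i i * M j j := by
    have h := (hM.submatrix ![i, j]).det_nonneg
    rw [det_fin_two] at h
    simpa [sub_nonneg] using h
  have hnormSq := (Complex.le_def.mp hdet).1
  rw [(hM.1.apply j i).symm, Complex.star_def, Complex.mul_conj, Complex.ofReal_re,
    Complex.mul_re, (hdiag i).2, (hdiag j).2, mul_zero, sub_zero] at hnormSq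
  have hsq : ‖M i j‖ ^ 2 ≤ M.trace.re ^ 2 := by
    rw [← Complex.normSq_eq_norm_sq]
    nlinarith [hdiag i, hdiag j, hle i, hle j]
  exact (abs_le_of_sq_le_sq' hsq (le_trans (hdiag i).1 (hle i))).2

lemma exists_re_trace_mul_eq (φ : Module.Dual ℝ (Matrix n n ℂ)) :
    ∃ Z : Matrix n n ℂ, ∀ M, (Z * M).trace.re = φ M := by
  let T : Matrix n n ℂ →ₗ[ℝ] Module.Dual ℝ (Matrix n n ℂ) :=
    LinearMap.mk₂ ℝ (fun Z M => (Z * M).trace.re)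
      (by intros; simp [Matrix.add_mul]) (by intros; simp [Matrix.smul_mul])
      (by intros; simp [Matrix.mul_add]) (by intros; simp [Matrix.mul_smul])
  have hT : Function.Injective T := by
    refine (injective_iff_map_eq_zero T).mpr fun Z hZ => ?_
    have hre : (Z * Zᴴ).trace.re = 0 := LinearMap.congr_fun hZ Zᴴ
    have him : (Z * Zᴴ).trace.im = 0 :=
      (Complex.nonneg_iff.mp (posSemidef_self_mul_conjTranspose Z).trace_nonneg).2.symm
    rw [← conjTranspose_eq_zero, ← trace_conjTranspose_mul_self_eq_zero_iff,
      conjTranspose_conjTranspose]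
    exact Complex.ext hre him
  obtain ⟨Z, hZ⟩ := (LinearMap.injective_iff_surjective_of_finrank_eq_finrank
    Subspace.dual_finrank_eq.symm).mp hT φ
  exact ⟨Z, fun M => LinearMap.congr_fun hZ M⟩

variable [DecidableEq n]

lemma PosSemidef.re_trace_mul_nonneg {P Q : Matrix n n ℂ} (hP : P.PosSemidef)
    (hQ : Q.PosSemidef) : 0 ≤ (P * Q).trace.re := by
  obtain ⟨S, rfl⟩ := CStarAlgebra.nonneg_iff_eq_star_mul_self.mp hP.nonneg
  rw [star_eq_conjTranspose, Matrix.mul_assoc, trace_mul_comm, Matrix.mul_assoc,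
    ← Matrix.mul_assoc]
  exact (Complex.nonneg_iff.mp (hQ.mul_mul_conjTranspose_same S).trace_nonneg).1

section L2

open scoped Norms.L2Operator

lemma realPart_le_norm_smul_one (Y : Matrix n n ℂ) : (ℜ Y : Matrix n n ℂ) ≤ ‖Y‖ • 1 :=
  calc (ℜ Y : Matrix n n ℂ) ≤ ‖(ℜ Y : Matrix n n ℂ)‖ • 1 := by
        simpa [Algebra.algebraMap_eq_smul_one] using (ℜ Y).2.le_algebraMap_norm_self
    _ ≤ ‖Y‖ • 1 := smul_le_smul_of_nonneg_right (realPart.norm_le Y) PosSemidef.one.nonneg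

lemma eventually_realPart_le_one :
    ∀ᶠ Y in nhds (0 : Matrix n n ℂ), (ℜ Y : Matrix n n ℂ) ≤ 1 := by
  filter_upwards [Metric.closedBall_mem_nhds (0 : Matrix n n ℂ) zero_lt_one] with Y hY
  have hY : ‖Y‖ • (1 : Matrix n n ℂ) ≤ (1 : ℝ) • 1 :=
    smul_le_smul_of_nonneg_right (mem_closedBall_zero_iff.mp hY) PosSemidef.one.nonneg
  exact (realPart_le_norm_smul_one Y).trans (by simpa using hY)

lemma isClosed_setOf_posSemidef : IsClosed {M : Matrix n n ℂ | M.PosSemidef} := by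
  simpa [nonneg_iff_posSemidef] using
    (CStarAlgebra.isClosed_nonneg : IsClosed {M : Matrix n n ℂ | 0 ≤ M})

end L2

lemma IsHermitian.exists_le_smul_one {M : Matrix n n ℂ} (hM : M.IsHermitian) :
    ∃ c : ℝ, 0 ≤ c ∧ M ≤ c • 1 := by
  open scoped Norms.L2Operator in
  exact ⟨‖M‖, norm_nonneg M, by
    simpa [hM.isSelfAdjoint.coe_realPart] using realPart_le_norm_smul_one M⟩

lemma isCompact_setOf_posSemidef_re_trace_le (t : ℝ) :
    IsCompact {M : Matrix n n ℂ | M.PosSemidef ∧ M.trace.re ≤ t} := by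
  refine (isCompact_univ_pi fun _ => isCompact_univ_pi fun _ =>
    isCompact_closedBall (0 : ℂ) t).of_isClosed_subset ?_ ?_
  · exact isClosed_setOf_posSemidef.inter
      (isClosed_le (Complex.continuous_re.comp continuous_id.matrix_trace) continuous_const)
  · rintro M ⟨hM, ht⟩ i - j -
    simpa using (hM.norm_apply_le_re_trace i j).trans ht

end Matrix

theorem geometric_hahn_banach_of_notMem_interior {E : Type*} [TopologicalSpace E]
    [AddCommGroup E] [IsTopologicalAddGroup E] [Module ℝ E] [ContinuousSMul ℝ E] {s : Set E}
    {x : E} (hs : Convex ℝ s) (hint : (interior s).Nonempty) (hx : x ∉ interior s) :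
    ∃ f : StrongDual ℝ E, (∀ a ∈ interior s, f a < f x) ∧ ∀ a ∈ s, f a ≤ f x := by
  obtain ⟨f, hf⟩ := geometric_hahn_banach_open_point hs.interior isOpen_interior hx
  refine ⟨f, hf, fun a ha => ?_⟩
  have ha' : a ∈ closure (interior s) := by
    rw [hs.closure_interior_eq_closure_of_nonempty_interior hint]
    exact subset_closure ha
  exact closure_minimal (fun b hb => (hf b hb).le) (isClosed_le f.continuous continuous_const) ha'

section PartialTrace

variable {A B : Type*}

lemma trace_one_kronecker_mul [Fintype A] [Fintype B] [DecidableEq A] (σ : Matrix B B ℂ)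
    (E : Matrix (A × B) (A × B) ℂ) :
    ((1 : Matrix A A ℂ) ⊗ₖ σ * E).trace = (σ * ptraceA E).trace := by
  simp only [trace, diag_apply, mul_apply, kroneckerMap_apply, one_apply, ite_mul, one_mul,
    zero_mul, Fintype.sum_prod_type, Finset.sum_ite_irrel, Finset.sum_const_zero,
    Finset.sum_ite_eq, Finset.mem_univ, if_true, ptraceA, of_apply, Finset.mul_sum]
  rw [Finset.sum_comm]
  exact Finset.sum_congr rfl fun b _ => Finset.sum_comm

lemma Matrix.IsHermitian.ptraceA [Fintype A] {E : Matrix (A × B) (A × B) ℂ}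
    (hE : E.IsHermitian) :
    (ptraceA E).IsHermitian := by
  ext i j
  simp only [conjTranspose_apply, _root_.ptraceA, of_apply, star_sum]
  exact Finset.sum_congr rfl fun a _ => hE.apply _ _

lemma continuous_one_kronecker [DecidableEq A] :
    Continuous fun σ : Matrix B B ℂ => (1 : Matrix A A ℂ) ⊗ₖ σ :=
  continuous_pi fun _ => continuous_pi fun _ =>
    continuous_const.mul ((continuous_apply _).comp (continuous_apply _))

end PartialTrace

namespace MinEntropySDP

variable {A B : Type*} [Fintype A] [Fintype B] [DecidableEq A] [DecidableEq B]

def primalFeasible (ρ : Matrix (A × B) (A × B) ℂ) : Set (Matrix B B ℂ) :=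
  {σ | σ.PosSemidef ∧ ((1 : Matrix A A ℂ) ⊗ₖ σ - ρ).PosSemidef}

variable (A B) in
def dualFeasible : Set (Matrix (A × B) (A × B) ℂ) :=
  {E | E.PosSemidef ∧ ((1 : Matrix B B ℂ) - ptraceA E).PosSemidef}

theorem weak_duality {ρ E : Matrix (A × B) (A × B) ℂ} {σ : Matrix B B ℂ}
    (hσ : σ ∈ primalFeasible ρ) (hE : E ∈ dualFeasible A B) :
    (ρ * E).trace.re ≤ σ.trace.re := by
  have h₁ := hσ.2.re_trace_mul_nonneg hE.1
  have h₂ := hσ.1.re_trace_mul_nonneg hE.2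
  rw [Matrix.sub_mul, trace_sub, trace_one_kronecker_mul, Complex.sub_re] at h₁
  rw [Matrix.mul_sub, Matrix.mul_one, trace_sub, Complex.sub_re] at h₂
  linarith

theorem exists_isMinOn_primalFeasible {ρ : Matrix (A × B) (A × B) ℂ} (hρ : ρ.IsHermitian) :
    ∃ σ ∈ primalFeasible ρ, IsMinOn (fun σ => σ.trace.re) (primalFeasible ρ) σ := by
  obtain ⟨c, hc, hρc⟩ := hρ.exists_le_smul_one
  have h₀ : c • (1 : Matrix B B ℂ) ∈ primalFeasible ρ :=
    ⟨(smul_nonneg hc (PosSemidef.one : (1 : Matrix B B ℂ).PosSemidef).nonneg).posSemidef, by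
      rwa [kronecker_smul c, one_kronecker_one]⟩
  have hclosed : IsClosed (primalFeasible ρ) :=
    isClosed_setOf_posSemidef.inter
      (isClosed_setOf_posSemidef.preimage (continuous_one_kronecker.sub continuous_const))
  refine (Complex.continuous_re.comp continuous_id.matrix_trace).continuousOn.exists_isMinOn'
    hclosed h₀ ?_
  filter_upwards [Filter.mem_inf_of_left (isCompact_setOf_posSemidef_re_trace_le
      (c • (1 : Matrix B B ℂ)).trace.re).compl_mem_cocompact,
    Filter.mem_inf_of_right (Filter.mem_principal_self _)] with σ hσK hσ
  exact le_of_not_ge fun h => hσK ⟨hσ.1, h⟩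

/-- The epigraph of the optimal primal value as a function of the perturbation `ρ ↦ ρ + ℜ Y`.
Perturbing by the Hermitian part lets `Y` range over all complex matrices, so that the set has
interior points. -/
def epigraph (ρ : Matrix (A × B) (A × B) ℂ) : Set (Matrix (A × B) (A × B) ℂ × ℝ) :=
  {p | ∃ σ : Matrix B B ℂ, 0 ≤ σ ∧
    (ℜ p.1 : Matrix (A × B) (A × B) ℂ) + ρ ≤ (1 : Matrix A A ℂ) ⊗ₖ σ ∧ σ.trace.re ≤ p.2}

lemma convex_epigraph (ρ : Matrix (A × B) (A × B) ℂ) : Convex ℝ (epigraph ρ) := by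
  rintro ⟨Y₁, t₁⟩ ⟨σ₁, hσ₁, hY₁, ht₁⟩ ⟨Y₂, t₂⟩ ⟨σ₂, hσ₂, hY₂, ht₂⟩ a b ha hb hab
  refine ⟨a • σ₁ + b • σ₂, add_nonneg (smul_nonneg ha hσ₁) (smul_nonneg hb hσ₂), ?_, ?_⟩
  · have hρab : ρ = a • ρ + b • ρ := by rw [← add_smul, hab, one_smul]
    have key :=
      add_le_add (smul_le_smul_of_nonneg_left hY₁ ha) (smul_le_smul_of_nonneg_left hY₂ hb)
    rw [← kronecker_smul a, ← kronecker_smul b, ← kronecker_add] at key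
    convert key using 1
    simp only [Prod.fst_add, Prod.smul_fst, map_add, map_smul, AddSubgroup.coe_add,
      selfAdjoint.val_smul]
    rw [smul_add, smul_add, add_add_add_comm, ← hρab]
  · simp only [Prod.snd_add, Prod.smul_snd, trace_add, trace_smul, Complex.add_re,
      Complex.real_smul, Complex.re_ofReal_mul, smul_eq_mul]
    nlinarith

lemma exists_mem_interior_epigraph {ρ : Matrix (A × B) (A × B) ℂ} (hρ : ρ.IsHermitian) :
    ∃ t : ℝ, ((0 : Matrix (A × B) (A × B) ℂ), t) ∈ interior (epigraph ρ) := by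
  obtain ⟨c, hc, hρc⟩ := hρ.exists_le_smul_one
  set σ₀ := (c + 1) • (1 : Matrix B B ℂ)
  refine ⟨σ₀.trace.re + 1, mem_interior_iff_mem_nhds.mpr ?_⟩
  rw [nhds_prod_eq]
  refine Filter.mem_of_superset (Filter.prod_mem_prod eventually_realPart_le_one
    (Ioi_mem_nhds (lt_add_one σ₀.trace.re))) ?_
  rintro ⟨Y, t⟩ ⟨hY, ht⟩
  refine ⟨σ₀, smul_nonneg (by linarith) PosSemidef.one.nonneg, ?_, le_of_lt ht⟩
  calc (ℜ Y : Matrix (A × B) (A × B) ℂ) + ρ ≤ 1 + c • 1 := add_le_add hY hρc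
    _ = (1 : Matrix A A ℂ) ⊗ₖ σ₀ := by
      rw [kronecker_smul, one_kronecker_one, add_smul, one_smul, add_comm]

omit [Fintype A] [DecidableEq B] in
lemma notMem_interior_epigraph {ρ : Matrix (A × B) (A × B) ℂ} {v : ℝ}
    (hv : ∀ σ ∈ primalFeasible ρ, v ≤ σ.trace.re) :
    ((0 : Matrix (A × B) (A × B) ℂ), v) ∉ interior (epigraph ρ) := by
  intro hint
  have hnhds : ∀ᶠ t in nhds v, ((0 : Matrix (A × B) (A × B) ℂ), t) ∈ epigraph ρ :=
    (continuous_const.prodMk continuous_id).continuousAt.preimage_mem_nhds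
      (mem_interior_iff_mem_nhds.mp hint)
  obtain ⟨t, ⟨σ, hσ, hρσ, hσt⟩, htv⟩ :=
    ((hnhds.filter_mono nhdsWithin_le_nhds).and self_mem_nhdsWithin).exists
      (f := nhdsWithin v (Set.Iio v))
  have : σ ∈ primalFeasible ρ := ⟨hσ.posSemidef, by simpa [le_iff] using hρσ⟩
  linarith [hv σ this]

theorem exists_affine_minorant {ρ : Matrix (A × B) (A × B) ℂ} (hρ : ρ.IsHermitian)
    {σ : Matrix B B ℂ} (hσ : σ ∈ primalFeasible ρ)
    (hmin : IsMinOn (fun σ => σ.trace.re) (primalFeasible ρ) σ) :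
    ∃ φ : Matrix (A × B) (A × B) ℂ →L[ℝ] ℝ,
      ∀ Y t, (Y, t) ∈ epigraph ρ → φ Y + σ.trace.re ≤ t := by
  obtain ⟨t₀, ht₀⟩ := exists_mem_interior_epigraph hρ
  obtain ⟨f, hf_int, hf⟩ := geometric_hahn_banach_of_notMem_interior (convex_epigraph ρ)
    ⟨_, ht₀⟩ (notMem_interior_epigraph fun τ hτ => hmin hτ)
  set g := f.comp (ContinuousLinearMap.inl ℝ _ ℝ)
  set s := f (0, 1)
  have hf_apply (Y : Matrix (A × B) (A × B) ℂ) (t : ℝ) : f (Y, t) = g Y + t * s := by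
    have : ((Y, t) : Matrix (A × B) (A × B) ℂ × ℝ) = (Y, 0) + t • (0, 1) := by simp
    rw [this, map_add, map_smul, smul_eq_mul]
    rfl
  have hs : s < 0 := by
    have h₁ := hf_int _ ht₀
    have h₂ := hf (0, σ.trace.re + 1)
      ⟨σ, hσ.1.nonneg, by simpa using le_iff.mpr hσ.2, by linarith⟩
    simp only [hf_apply, map_zero, zero_add] at h₁ h₂
    rcases lt_trichotomy s 0 with h | h | h
    · exact h
    · simp [h] at h₁
    · nlinarith
  refine ⟨(-s)⁻¹ • g, fun Y t hYt => ?_⟩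
  have h := hf _ hYt
  simp only [hf_apply, map_zero, zero_add] at h
  simp only [FunLike.coe_smul, Pi.smul_apply, smul_eq_mul]
  have hdiff :
      t - ((-s)⁻¹ * g Y + σ.trace.re) = (-s)⁻¹ * (σ.trace.re * s - (g Y + t * s)) := by
    field_simp [hs.ne]
    ring
  rw [← sub_nonneg, hdiff]
  exact mul_nonneg (inv_nonneg.mpr (by linarith)) (by linarith)

theorem exists_positive_functional {ρ : Matrix (A × B) (A × B) ℂ} (hρ : ρ.IsHermitian)
    {σ : Matrix B B ℂ} (hσ : σ ∈ primalFeasible ρ)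
    (hmin : IsMinOn (fun σ => σ.trace.re) (primalFeasible ρ) σ) :
    ∃ φ : Matrix (A × B) (A × B) ℂ →L[ℝ] ℝ, (∀ P, P.PosSemidef → 0 ≤ φ P) ∧
      (∀ τ : Matrix B B ℂ, τ.PosSemidef → φ ((1 : Matrix A A ℂ) ⊗ₖ τ) ≤ τ.trace.re) ∧
      σ.trace.re ≤ φ ρ := by
  obtain ⟨φ, hφ⟩ := exists_affine_minorant hρ hσ hmin
  have hσρ : ρ ≤ (1 : Matrix A A ℂ) ⊗ₖ σ := hσ.2
  refine ⟨φ, fun P hP => ?_, fun τ hτ => ?_, ?_⟩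
  · have h := hφ (-P) σ.trace.re ⟨σ, hσ.1.nonneg, by
      simpa [hP.1.isSelfAdjoint.coe_realPart] using
        (add_le_of_nonpos_left (neg_nonpos.mpr hP.nonneg)).trans hσρ, le_rfl⟩
    simp only [map_neg] at h
    linarith
  · have hτσ : ((ℜ ((1 : Matrix A A ℂ) ⊗ₖ τ) : Matrix (A × B) (A × B) ℂ)) + ρ ≤
        (1 : Matrix A A ℂ) ⊗ₖ (σ + τ) := by
      rw [(PosSemidef.one.kronecker hτ).1.isSelfAdjoint.coe_realPart, kronecker_add, add_comm]
      exact add_le_add_left hσρ _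
    have h := hφ ((1 : Matrix A A ℂ) ⊗ₖ τ) (σ.trace.re + τ.trace.re)
      ⟨σ + τ, add_nonneg hσ.1.nonneg hτ.nonneg, hτσ, by simp [trace_add]⟩
    linarith
  · have h := hφ (-ρ) 0 ⟨0, le_rfl, by simp [hρ.isSelfAdjoint.coe_realPart], by simp⟩
    simp only [map_neg] at h
    linarith

theorem exists_mem_dualFeasible_of_functional (φ : Matrix (A × B) (A × B) ℂ →ₗ[ℝ] ℝ)
    (hpos : ∀ P, P.PosSemidef → 0 ≤ φ P)
    (hle : ∀ τ : Matrix B B ℂ, τ.PosSemidef → φ ((1 : Matrix A A ℂ) ⊗ₖ τ) ≤ τ.trace.re) :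
    ∃ E ∈ dualFeasible A B, ∀ M, M.IsHermitian → (M * E).trace.re = φ M := by
  obtain ⟨Z, hZ⟩ := exists_re_trace_mul_eq φ
  set E : Matrix (A × B) (A × B) ℂ := (ℜ Z : Matrix (A × B) (A × B) ℂ)
  have hE : E.IsHermitian := (ℜ Z).2
  have hEφ (M) (hM : M.IsHermitian) : (E * M).trace.re = φ M :=
    (re_trace_realPart_mul Z hM).trans (hZ M)
  refine ⟨E, ⟨?_, ?_⟩, fun M hM => by rw [trace_mul_comm, hEφ M hM]⟩
  · exact hE.posSemidef_of_re_trace_mul_nonneg fun P hP => (hEφ P hP.1).ge.trans' (hpos P hP)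
  · refine (isHermitian_one.sub hE.ptraceA).posSemidef_of_re_trace_mul_nonneg fun τ hτ => ?_
    rw [Matrix.sub_mul, Matrix.one_mul, trace_sub, Complex.sub_re, trace_mul_comm,
      ← trace_one_kronecker_mul, trace_mul_comm, hEφ _ (PosSemidef.one.kronecker hτ).1]
    linarith [hle τ hτ]

end MinEntropySDP

theorem stmt1_general {A B : Type*} [Fintype A] [Fintype B] [DecidableEq A] [DecidableEq B]
    (ρ : Matrix (A × B) (A × B) ℂ) (hρ : ρ.PosSemidef) :
    ∃ v : ℝ,
      IsLeast {x : ℝ | ∃ σ : Matrix B B ℂ, σ.PosSemidef ∧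
          ((1 : Matrix A A ℂ) ⊗ₖ σ - ρ).PosSemidef ∧ x = σ.trace.re} v ∧
      IsGreatest {x : ℝ | ∃ E : Matrix (A × B) (A × B) ℂ, E.PosSemidef ∧
          ((1 : Matrix B B ℂ) - ptraceA E).PosSemidef ∧ x = (ρ * E).trace.re} v := by
  obtain ⟨σ, hσ, hmin⟩ := MinEntropySDP.exists_isMinOn_primalFeasible hρ.1
  obtain ⟨φ, hpos, hle, hσφ⟩ := MinEntropySDP.exists_positive_functional hρ.1 hσ hmin
  obtain ⟨E, hE, hEφ⟩ :=
    MinEntropySDP.exists_mem_dualFeasible_of_functional φ.toLinearMap hpos hle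
  refine ⟨σ.trace.re, ⟨⟨σ, hσ.1, hσ.2, rfl⟩, ?_⟩, ⟨E, hE.1, hE.2, ?_⟩, ?_⟩
  · rintro _ ⟨τ, hτ, hτρ, rfl⟩
    exact hmin ⟨hτ, hτρ⟩
  · exact le_antisymm (hσφ.trans (hEφ ρ hρ.1).ge) (MinEntropySDP.weak_duality hσ hE)
  · rintro _ ⟨E', hE', hE'1, rfl⟩
    exact MinEntropySDP.weak_duality hσ ⟨hE', hE'1⟩

/-- the minimum of `tr σ_B` over PSD `σ_B` with `id_A ⊗ σ_B ≥ ρ_AB`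
equals the maximum of `tr(ρ_AB E_AB)` over PSD `E_AB` with `tr_A E_AB ≤ id_B`. -/
theorem stmt1 {A B : Type*} [Fintype A] [Fintype B] [DecidableEq A] [DecidableEq B]
    [Nonempty A] [Nonempty B]
    (ρ : Matrix (A × B) (A × B) ℂ) (hρ : ρ.PosSemidef) :
    ∃ v : ℝ,
      IsLeast {x : ℝ | ∃ σ : Matrix B B ℂ, σ.PosSemidef ∧
          ((1 : Matrix A A ℂ) ⊗ₖ σ - ρ).PosSemidef ∧ x = σ.trace.re} v ∧
      IsGreatest {x : ℝ | ∃ E : Matrix (A × B) (A × B) ℂ, E.PosSemidef ∧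
          ((1 : Matrix B B ℂ) - ptraceA E).PosSemidef ∧ x = (ρ * E).trace.re} v :=
  stmt1_general ρ hρ

end
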